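/- arXiv:2404.01788 — 3 statements merged into one kernel-verified Lean document; each statement's English description precedes it below -/
import Mathlib

section
/- For every positive integer n, there exists a bijection φ from the set of permutations of {1,...,n} to itself such that for every permutation w: φ(w)(1) = w(1), nexc(w) = des(φ(w)), and depth(w) = drp(φ(w)). -/
open Finset

/-- The one-line notation value of `π` at position `k ∈ {1,…,n}`:
`oneLine π k = π(k)` with `1`-indexed positions and values. -/
def oneLine {n : ℕ} (π : Equiv.Perm (Fin n)) (k : ℕ) : ℕ :=
  if h : k - 1 < n then ((π ⟨k - 1, h⟩ : Fin n) : ℕ) + 1 else k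

/-- `SUC(π) = {i ∈ {1,…,n-1} : π(i+1) = π(i)+1}` (position set). -/
def SUC {n : ℕ} (π : Equiv.Perm (Fin n)) : Finset ℕ :=
  (Finset.Icc 1 (n - 1)).filter (fun i => oneLine π (i + 1) = oneLine π i + 1)

/-- `FIX(π) = {i ∈ {1,…,n-1} : π(i) = i}` (position set). -/
def FIX {n : ℕ} (π : Equiv.Perm (Fin n)) : Finset ℕ :=
  (Finset.Icc 1 (n - 1)).filter (fun i => oneLine π i = i)

/-- `Asc₂(π) = {π(i+1) : i ∈ {1,…,n-1}, π(i+1) ≥ π(i)+2}` (value set). -/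
def Asc2 {n : ℕ} (π : Equiv.Perm (Fin n)) : Finset ℕ :=
  ((Finset.Icc 1 (n - 1)).filter (fun i => oneLine π i + 2 ≤ oneLine π (i + 1))).image
    (fun i => oneLine π (i + 1))

/-- `Des(π) = {π(i+1) : i ∈ {1,…,n-1}, π(i) > π(i+1)}` (value set). -/
def DesSet {n : ℕ} (π : Equiv.Perm (Fin n)) : Finset ℕ :=
  ((Finset.Icc 1 (n - 1)).filter (fun i => oneLine π (i + 1) < oneLine π i)).image
    (fun i => oneLine π (i + 1))

/-- `Suc(π) = {π(i+1) : i ∈ {1,…,n-1}, π(i+1) = π(i)+1}` (value set). -/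
def SucSet {n : ℕ} (π : Equiv.Perm (Fin n)) : Finset ℕ :=
  ((Finset.Icc 1 (n - 1)).filter (fun i => oneLine π (i + 1) = oneLine π i + 1)).image
    (fun i => oneLine π (i + 1))

/-- `Aexc(π) = {π(i) : i ∈ {2,…,n}, π(i) < i}` (value set). -/
def Aexc {n : ℕ} (π : Equiv.Perm (Fin n)) : Finset ℕ :=
  ((Finset.Icc 2 n).filter (fun i => oneLine π i < i)).image (fun i => oneLine π i)

/-- `Êxc(π) = {π(i) : i ∈ {2,…,n}, π(i) > i}` (value set). -/
def ExcHat {n : ℕ} (π : Equiv.Perm (Fin n)) : Finset ℕ :=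
  ((Finset.Icc 2 n).filter (fun i => i < oneLine π i)).image (fun i => oneLine π i)

/-- `F̂ix(π) = {π(i) : i ∈ {2,…,n}, π(i) = i}` (value set). -/
def FixHat {n : ℕ} (π : Equiv.Perm (Fin n)) : Finset ℕ :=
  ((Finset.Icc 2 n).filter (fun i => oneLine π i = i)).image (fun i => oneLine π i)

/-- `depth(π) = ∑_{i : π(i) > i} (π(i) − i)`. -/
def depthStat {n : ℕ} (π : Equiv.Perm (Fin n)) : ℕ :=
  ∑ i ∈ (Finset.Icc 1 n).filter (fun i => i < oneLine π i), (oneLine π i - i)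

/-- `drp(π) = ∑_{i ∈ {1,…,n-1} : π(i) > π(i+1)} (π(i) − π(i+1))`. -/
def drpStat {n : ℕ} (π : Equiv.Perm (Fin n)) : ℕ :=
  ∑ i ∈ (Finset.Icc 1 (n - 1)).filter (fun i => oneLine π (i + 1) < oneLine π i),
    (oneLine π i - oneLine π (i + 1))

/-- `exc(π) = |{i ∈ {1,…,n} : π(i) > i}|`. -/
def excNum {n : ℕ} (π : Equiv.Perm (Fin n)) : ℕ :=
  ((Finset.Icc 1 n).filter (fun i => i < oneLine π i)).card

/-- `nexc(π) = |{i ∈ {1,…,n} : π(i) < i}|`. -/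
def nexcNum {n : ℕ} (π : Equiv.Perm (Fin n)) : ℕ :=
  ((Finset.Icc 1 n).filter (fun i => oneLine π i < i)).card

/-- `des(π) = |{i ∈ {1,…,n-1} : π(i) > π(i+1)}|`. -/
def desNum {n : ℕ} (π : Equiv.Perm (Fin n)) : ℕ :=
  ((Finset.Icc 1 (n - 1)).filter (fun i => oneLine π (i + 1) < oneLine π i)).card

/-- `asc(π) = |{i ∈ {1,…,n-1} : π(i) < π(i+1)}|`. -/
def ascNum {n : ℕ} (π : Equiv.Perm (Fin n)) : ℕ :=
  ((Finset.Icc 1 (n - 1)).filter (fun i => oneLine π i < oneLine π (i + 1))).card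

/-- `inv(π) = |{(i,j) : 1 ≤ i < j ≤ n, π(i) > π(j)}|`. -/
def invNum {n : ℕ} (π : Equiv.Perm (Fin n)) : ℕ :=
  (((Finset.Icc 1 n) ×ˢ (Finset.Icc 1 n)).filter
    (fun p : ℕ × ℕ => p.1 < p.2 ∧ oneLine π p.2 < oneLine π p.1)).card

/-!
Work with `v : Perm (Fin (n + 1))`, so that positions and letters are shifted down by one and
the letter `1` is `0`. Cut `v` into blocks: the first one runs from the start to the letter `0`,
and after it a new block begins at every left-to-right maximum. Reading each block as a cycle
gives `ψ v := blockCyclePerm v`. Along a block `ψ v` sends `v i` to `v (i + 1)`, and it closes a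
block by sending its last letter to its first one, which is not smaller (the first block ends at
`0`, every later block starts at its maximum). Block boundaries are never descents, so the
non-excedances of `ψ v` are exactly the descents of `v`, with the same drops; as the excedance
sum of any permutation equals its non-excedance sum, `nexc (ψ v) = des v` and
`depth (ψ v) = drp v`, and `ψ v` fixes the first letter. Finally `v` is read back from `ψ v`
letter by letter, so `ψ` is injective, hence bijective, and `φ = ψ⁻¹`.
-/

namespace Equiv.Perm

variable {n : ℕ} (v : Perm (Fin (n + 1)))

/-- Blocks are the intervals between consecutive block starts: the first block ends at the letter
`0`, and after it a block starts at every left-to-right maximum. -/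
def IsBlockStart (s : Fin (n + 1)) : Prop :=
  s = 0 ∨ v⁻¹ 0 < s ∧ ∀ j, v⁻¹ 0 < j → j < s → v j < v s

open Classical in
noncomputable def blockStart (i : Fin (n + 1)) : Fin (n + 1) :=
  (Finset.univ.filter fun s => v.IsBlockStart s ∧ s ≤ i).max'
    ⟨0, Finset.mem_filter.2 ⟨Finset.mem_univ _, Or.inl rfl, Fin.zero_le i⟩⟩

open Classical in
/-- Rotates every block one step to the left. As `Fin.last n + 1 = 0` is a block start, the
wrap-around in `i + 1` is harmless. -/
noncomputable def blockNext (i : Fin (n + 1)) : Fin (n + 1) :=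
  if v.IsBlockStart (i + 1) then v.blockStart i else i + 1

variable {v} {i s t : Fin (n + 1)}

lemma isBlockStart_zero : v.IsBlockStart 0 := Or.inl rfl

lemma isBlockStart_last_add_one : v.IsBlockStart (Fin.last n + 1) := by
  rw [Fin.last_add_one]
  exact isBlockStart_zero

lemma IsBlockStart.inv_zero_lt (hs : v.IsBlockStart s) (h0 : s ≠ 0) : v⁻¹ 0 < s :=
  (hs.resolve_left h0).1

lemma IsBlockStart.apply_lt (hs : v.IsBlockStart s) (h0 : s ≠ 0) {j : Fin (n + 1)}
    (hj : v⁻¹ 0 < j) (hjs : j < s) : v j < v s :=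
  (hs.resolve_left h0).2 j hj hjs

lemma isBlockStart_blockStart_and_le (i : Fin (n + 1)) :
    v.IsBlockStart (v.blockStart i) ∧ v.blockStart i ≤ i := by
  classical
  exact (Finset.mem_filter.mp
    (Finset.max'_mem (Finset.univ.filter fun s => v.IsBlockStart s ∧ s ≤ i) _)).2

lemma isBlockStart_blockStart (i : Fin (n + 1)) : v.IsBlockStart (v.blockStart i) :=
  (isBlockStart_blockStart_and_le i).1

lemma blockStart_le (i : Fin (n + 1)) : v.blockStart i ≤ i :=
  (isBlockStart_blockStart_and_le i).2

lemma le_blockStart (hs : v.IsBlockStart s) (h : s ≤ i) : s ≤ v.blockStart i := by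
  classical
  exact Finset.le_max' _ _ (by simp [hs, h])

lemma blockStart_eq_self (hs : v.IsBlockStart s) : v.blockStart s = s :=
  le_antisymm (blockStart_le s) (le_blockStart hs le_rfl)

lemma blockStart_succ {i : Fin n} (h : ¬ v.IsBlockStart i.succ) :
    v.blockStart i.succ = v.blockStart i.castSucc := by
  apply le_antisymm
  · have hne : v.blockStart i.succ ≠ i.succ := fun he => h (he ▸ isBlockStart_blockStart _)
    exact le_blockStart (isBlockStart_blockStart _)
      (Fin.le_castSucc_iff.mpr ((blockStart_le _).lt_of_ne hne))
  · exact le_blockStart (isBlockStart_blockStart _)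
      ((blockStart_le _).trans Fin.castSucc_lt_succ.le)

lemma inv_zero_le_of_isBlockStart_add_one (h : v.IsBlockStart (i + 1)) : v⁻¹ 0 ≤ i := by
  by_contra! hi
  obtain ⟨j, rfl⟩ : ∃ j, Fin.castSucc j = i :=
    Fin.exists_castSucc_eq.mpr (hi.trans_le (Fin.le_last _)).ne
  rw [Fin.coeSucc_eq_succ] at h
  exact hi.not_ge (Fin.le_castSucc_iff.mpr (h.inv_zero_lt j.succ_ne_zero))

lemma apply_le_apply_blockStart (h : v⁻¹ 0 ≤ t) : v t ≤ v (v.blockStart t) := by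
  rcases h.eq_or_lt with rfl | h
  · simp
  obtain ⟨m, hm, hmax⟩ :=
    (Finset.Ioc (v⁻¹ 0) t).exists_max_image v ⟨t, Finset.mem_Ioc.2 ⟨h, le_rfl⟩⟩
  rw [Finset.mem_Ioc] at hm
  have hm_start : v.IsBlockStart m := Or.inr ⟨hm.1, fun j hj hjm =>
    (hmax j (Finset.mem_Ioc.2 ⟨hj, hjm.le.trans hm.2⟩)).lt_of_ne (v.injective.ne hjm.ne)⟩
  have htm : v t ≤ v m := hmax t (Finset.mem_Ioc.2 ⟨h, le_rfl⟩)
  rcases (le_blockStart hm_start hm.2).eq_or_lt with he | hlt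
  · rwa [← he]
  · exact htm.trans ((isBlockStart_blockStart t).apply_lt
      ((Fin.zero_le m).trans_lt hlt).ne' hm.1 hlt).le

lemma not_isBlockStart_succ_of_lt {i : Fin n} (h : v i.succ < v i.castSucc) :
    ¬ v.IsBlockStart i.succ := by
  intro hs
  rcases (Fin.le_castSucc_iff.mpr (hs.inv_zero_lt i.succ_ne_zero)).eq_or_lt with he | hlt
  · simp [← he] at h
  · exact (hs.apply_lt i.succ_ne_zero hlt Fin.castSucc_lt_succ).not_gt h

lemma blockNext_of_isBlockStart (h : v.IsBlockStart (i + 1)) : v.blockNext i = v.blockStart i :=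
  if_pos h

lemma blockNext_of_not_isBlockStart (h : ¬ v.IsBlockStart (i + 1)) : v.blockNext i = i + 1 :=
  if_neg h

lemma lt_blockStart_of_isBlockStart_add_one {a b : Fin (n + 1)} (ha : v.IsBlockStart (a + 1))
    (hab : a < b) : a < v.blockStart b := by
  obtain ⟨j, rfl⟩ : ∃ j, Fin.castSucc j = a :=
    Fin.exists_castSucc_eq.mpr (hab.trans_le (Fin.le_last b)).ne
  rw [Fin.coeSucc_eq_succ] at ha
  exact Fin.castSucc_lt_succ.trans_le (le_blockStart ha (Fin.castSucc_lt_iff_succ_le.mp hab))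

lemma blockNext_injective : Function.Injective v.blockNext := by
  intro a b hab
  by_cases ha : v.IsBlockStart (a + 1) <;> by_cases hb : v.IsBlockStart (b + 1)
  · rw [blockNext_of_isBlockStart ha, blockNext_of_isBlockStart hb] at hab
    by_contra hne
    rcases lt_or_gt_of_ne hne with h | h
    · exact (lt_blockStart_of_isBlockStart_add_one ha h).not_ge (hab ▸ blockStart_le a)
    · exact (lt_blockStart_of_isBlockStart_add_one hb h).not_ge (hab ▸ blockStart_le b)
  · rw [blockNext_of_isBlockStart ha, blockNext_of_not_isBlockStart hb] at hab
    exact absurd (hab ▸ isBlockStart_blockStart a) hb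
  · rw [blockNext_of_not_isBlockStart ha, blockNext_of_isBlockStart hb] at hab
    exact absurd (hab ▸ isBlockStart_blockStart b) ha
  · rw [blockNext_of_not_isBlockStart ha, blockNext_of_not_isBlockStart hb] at hab
    exact add_right_cancel hab

variable (v) in
noncomputable def blockRotate : Perm (Fin (n + 1)) :=
  Equiv.ofBijective v.blockNext (Finite.injective_iff_bijective.mp blockNext_injective)

@[simp]
lemma blockRotate_apply (i : Fin (n + 1)) : v.blockRotate i = v.blockNext i := rfl

lemma blockStart_blockNext (i : Fin (n + 1)) : v.blockStart (v.blockNext i) = v.blockStart i := by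
  by_cases h : v.IsBlockStart (i + 1)
  · rw [blockNext_of_isBlockStart h, blockStart_eq_self (isBlockStart_blockStart i)]
  rw [blockNext_of_not_isBlockStart h]
  obtain ⟨j, rfl⟩ | rfl := Fin.eq_castSucc_or_eq_last i
  · rw [Fin.coeSucc_eq_succ] at h ⊢
    exact blockStart_succ h
  · exact absurd isBlockStart_last_add_one h

lemma blockStart_blockRotate_pow_apply (k : ℕ) (i : Fin (n + 1)) :
    v.blockStart ((v.blockRotate ^ k) i) = v.blockStart i := by
  induction k with
  | zero => rfl
  | succ k ih => rw [pow_succ', mul_apply, blockRotate_apply, blockStart_blockNext, ih]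

lemma sameCycle_blockStart (t : Fin (n + 1)) : v.blockRotate.SameCycle (v.blockStart t) t := by
  induction t using Fin.induction with
  | zero => rw [blockStart_eq_self isBlockStart_zero]
  | succ i ih =>
    by_cases h : v.IsBlockStart i.succ
    · rw [blockStart_eq_self h]
    have hnext : v.blockRotate i.castSucc = i.succ := by
      rw [blockRotate_apply, blockNext_of_not_isBlockStart (by rwa [Fin.coeSucc_eq_succ]),
        Fin.coeSucc_eq_succ]
    rw [blockStart_succ h, ← hnext]
    exact sameCycle_apply_right.mpr ih

lemma sameCycle_blockRotate_iff {a b : Fin (n + 1)} :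
    v.blockRotate.SameCycle a b ↔ v.blockStart a = v.blockStart b := by
  refine ⟨fun h => ?_, fun h =>
    (sameCycle_blockStart a).symm.trans (h ▸ sameCycle_blockStart b)⟩
  obtain ⟨k, -, rfl⟩ := h.exists_pow_eq'
  exact (blockStart_blockRotate_pow_apply k a).symm

lemma blockNext_le_iff : v.blockNext i ≤ i ↔ v.IsBlockStart (i + 1) := by
  by_cases h : v.IsBlockStart (i + 1)
  · simp [blockNext_of_isBlockStart h, h, blockStart_le]
  simp only [blockNext_of_not_isBlockStart h, h, iff_false, not_le]
  obtain ⟨j, rfl⟩ | rfl := Fin.eq_castSucc_or_eq_last i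
  · rw [Fin.coeSucc_eq_succ]
    exact Fin.castSucc_lt_succ
  · exact absurd isBlockStart_last_add_one h

lemma blockNext_castSucc_of_lt {i : Fin n} (h : v i.succ < v i.castSucc) :
    v.blockNext i.castSucc = i.succ := by
  rw [blockNext_of_not_isBlockStart
    (by rw [Fin.coeSucc_eq_succ]; exact not_isBlockStart_succ_of_lt h), Fin.coeSucc_eq_succ]

lemma apply_le_apply_blockNext (h : v.IsBlockStart (i + 1)) : v i ≤ v (v.blockNext i) := by
  rw [blockNext_of_isBlockStart h]
  exact apply_le_apply_blockStart (inv_zero_le_of_isBlockStart_add_one h)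

lemma blockNext_inv_zero : v.blockNext (v⁻¹ 0) = 0 := by
  have hstart : v.IsBlockStart (v⁻¹ 0 + 1) := by
    obtain ⟨j, hj⟩ | hlast := Fin.eq_castSucc_or_eq_last (v⁻¹ 0)
    · rw [hj, Fin.coeSucc_eq_succ]
      exact Or.inr ⟨hj ▸ Fin.castSucc_lt_succ,
        fun k hk hks => absurd (hj ▸ hk) (Fin.le_castSucc_iff.mpr hks).not_gt⟩
    · rw [hlast]
      exact isBlockStart_last_add_one
  rw [blockNext_of_isBlockStart hstart]
  by_contra h0
  exact ((isBlockStart_blockStart _).inv_zero_lt h0).not_ge (blockStart_le _)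

variable (v) in
noncomputable def blockCyclePerm : Perm (Fin (n + 1)) :=
  v * v.blockRotate * v⁻¹

@[simp]
lemma blockCyclePerm_apply_apply (i : Fin (n + 1)) :
    v.blockCyclePerm (v i) = v (v.blockNext i) := by
  simp [blockCyclePerm]

lemma blockCyclePerm_zero : v.blockCyclePerm 0 = v 0 := by
  have h := blockCyclePerm_apply_apply (v := v) (v⁻¹ 0)
  rw [blockNext_inv_zero] at h
  simpa using h

lemma sum_blockCyclePerm_lt {M : Type*} [AddCommMonoid M] (g : Fin (n + 1) → Fin (n + 1) → M) :
    ∑ x, (if v.blockCyclePerm x < x then g x (v.blockCyclePerm x) else 0) =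
      ∑ i : Fin n, if v i.succ < v i.castSucc then g (v i.castSucc) (v i.succ) else 0 := by
  rw [← Equiv.sum_comp v, Fin.sum_univ_castSucc]
  simp only [blockCyclePerm_apply_apply]
  rw [if_neg (apply_le_apply_blockNext isBlockStart_last_add_one).not_gt, add_zero]
  refine Finset.sum_congr rfl fun i _ => ?_
  by_cases h : v i.succ < v i.castSucc
  · simp only [blockNext_castSucc_of_lt h, if_pos h]
  rw [if_neg h, if_neg]
  by_cases hs : v.IsBlockStart i.succ
  · exact (apply_le_apply_blockNext (by rwa [Fin.coeSucc_eq_succ])).not_gt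
  · rwa [blockNext_of_not_isBlockStart (by rwa [Fin.coeSucc_eq_succ]), Fin.coeSucc_eq_succ]

lemma sameCycle_blockCyclePerm_apply_iff {a b : Fin (n + 1)} :
    v.blockCyclePerm.SameCycle (v a) (v b) ↔ v.blockStart a = v.blockStart b := by
  rw [blockCyclePerm, sameCycle_conj]
  simpa using sameCycle_blockRotate_iff

/-- At a block start, `v` is recovered from `blockCyclePerm v` and the letters already placed: it
is the least unused letter that is the largest of its cycle. -/
lemma isLeast_apply_of_isBlockStart (hs : v.IsBlockStart s) (h0 : s ≠ 0) :
    IsLeast {x | x ∉ v '' Set.Iio s ∧ ∀ y, v.blockCyclePerm.SameCycle x y → y ≤ x}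
      (v s) := by
  have hp := hs.inv_zero_lt h0
  refine ⟨⟨fun hx => ?_, fun y hy => ?_⟩, fun x ⟨hx, hmax⟩ => ?_⟩
  · rw [v.injective.mem_set_image] at hx
    exact lt_irrefl s hx
  · obtain ⟨t, rfl⟩ := v.surjective y
    have ht := (sameCycle_blockCyclePerm_apply_iff.mp hy).symm
    rw [blockStart_eq_self hs] at ht
    exact ht ▸ apply_le_apply_blockStart (hp.le.trans (ht ▸ blockStart_le t))
  · obtain ⟨t, rfl⟩ := v.surjective x
    have hst : s ≤ t := not_lt.mp fun h => hx ⟨t, h, rfl⟩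
    have hblock : v (v.blockStart t) ≤ v t :=
      hmax _ (sameCycle_blockCyclePerm_apply_iff.mpr
        (blockStart_eq_self (isBlockStart_blockStart t)).symm)
    rcases (le_blockStart hs hst).eq_or_lt with he | hlt
    · rwa [← he] at hblock
    · exact ((isBlockStart_blockStart t).apply_lt ((Fin.zero_le s).trans_lt hlt).ne' hp
        hlt).le.trans hblock

lemma isBlockStart_add_one_iff :
    v.IsBlockStart (i + 1) ↔ v.blockCyclePerm (v i) ∈ v '' Set.Iic i := by
  rw [blockCyclePerm_apply_apply, v.injective.mem_set_image, Set.mem_Iic, blockNext_le_iff]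

lemma apply_succ_of_not_isBlockStart {i : Fin n} (h : ¬ v.IsBlockStart i.succ) :
    v i.succ = v.blockCyclePerm (v i.castSucc) := by
  rw [blockCyclePerm_apply_apply, blockNext_of_not_isBlockStart (by rwa [Fin.coeSucc_eq_succ]),
    Fin.coeSucc_eq_succ]

theorem blockCyclePerm_injective :
    Function.Injective (blockCyclePerm : Perm (Fin (n + 1)) → Perm (Fin (n + 1))) := by
  intro v u h
  suffices ∀ k, ∀ j ≤ k, v j = u j from Equiv.ext fun j => this j j le_rfl
  intro k
  induction k using Fin.induction with
  | zero =>
    intro j hj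
    rw [Fin.le_zero_iff.mp hj, ← blockCyclePerm_zero, h, blockCyclePerm_zero]
  | succ i ih =>
    intro j hj
    rcases hj.lt_or_eq with hj | rfl
    · exact ih j (Fin.le_castSucc_iff.mpr hj)
    have hstart : v.IsBlockStart i.succ ↔ u.IsBlockStart i.succ := by
      rw [← Fin.coeSucc_eq_succ, isBlockStart_add_one_iff, isBlockStart_add_one_iff, h,
        ih _ le_rfl, Set.image_congr fun j (hj : j ∈ Set.Iic _) => ih j hj]
    by_cases hs : v.IsBlockStart i.succ
    · have hv := isLeast_apply_of_isBlockStart hs i.succ_ne_zero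
      rw [h, Set.image_congr fun j (hj : j ∈ Set.Iio _) => ih j (Fin.le_castSucc_iff.mpr hj)]
        at hv
      exact hv.unique (isLeast_apply_of_isBlockStart (hstart.mp hs) i.succ_ne_zero)
    · rw [apply_succ_of_not_isBlockStart hs, apply_succ_of_not_isBlockStart (hstart.not.mp hs), h,
        ih _ le_rfl]

end Equiv.Perm

section OneLine

variable {N : ℕ}

lemma oneLine_val_add_one (w : Equiv.Perm (Fin N)) (x : Fin N) : oneLine w (x + 1) = w x + 1 := by
  simp [oneLine]

lemma oneLine_castSucc {n : ℕ} (w : Equiv.Perm (Fin (n + 1))) (i : Fin n) :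
    oneLine w (i + 1) = w i.castSucc + 1 := by
  simpa using oneLine_val_add_one w i.castSucc

lemma oneLine_succ {n : ℕ} (w : Equiv.Perm (Fin (n + 1))) (i : Fin n) :
    oneLine w (i + 1 + 1) = w i.succ + 1 := by
  simpa using oneLine_val_add_one w i.succ

lemma sum_filter_Icc_one_eq_sum_fin {M : Type*} [AddCommMonoid M] (P : ℕ → Prop)
    [DecidablePred P] (f : ℕ → M) :
    ∑ k ∈ (Icc 1 N).filter P, f k = ∑ i : Fin N, if P (i + 1) then f (i + 1) else 0 := by
  rw [sum_filter, Fin.sum_univ_eq_sum_range (fun i => if P (i + 1) then f (i + 1) else 0),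
    range_eq_Ico, sum_Ico_add' (fun k => if P k then f k else 0), zero_add,
    Ico_add_one_right_eq_Icc]

lemma nexcNum_eq_sum (w : Equiv.Perm (Fin N)) :
    nexcNum w = ∑ x, if w x < x then 1 else 0 := by
  rw [nexcNum, card_eq_sum_ones, sum_filter_Icc_one_eq_sum_fin]
  simp [oneLine_val_add_one]

lemma depthStat_eq_sum (w : Equiv.Perm (Fin N)) :
    depthStat w = ∑ x, if x < w x then (w x : ℕ) - x else 0 := by
  simp [depthStat, sum_filter_Icc_one_eq_sum_fin, oneLine_val_add_one]

lemma desNum_eq_sum {n : ℕ} (v : Equiv.Perm (Fin (n + 1))) :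
    desNum v = ∑ i : Fin n, if v i.succ < v i.castSucc then 1 else 0 := by
  rw [desNum, card_eq_sum_ones, Nat.add_sub_cancel, sum_filter_Icc_one_eq_sum_fin]
  simp [oneLine_castSucc, oneLine_succ]

lemma drpStat_eq_sum {n : ℕ} (v : Equiv.Perm (Fin (n + 1))) :
    drpStat v =
      ∑ i : Fin n, if v i.succ < v i.castSucc then (v i.castSucc : ℕ) - v i.succ else 0 := by
  simp [drpStat, sum_filter_Icc_one_eq_sum_fin, oneLine_castSucc, oneLine_succ]

end OneLine

lemma sum_excedance_eq_sum_nonexcedance {N : ℕ} (w : Equiv.Perm (Fin N)) :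
    ∑ x, (if x < w x then (w x : ℕ) - x else 0) =
      ∑ x, if w x < x then (x : ℕ) - w x else 0 := by
  have hzero : ∑ x, ((w x : ℤ) - x) = 0 := by
    rw [sum_sub_distrib, Equiv.sum_comp w (fun x => (x : ℤ)), sub_self]
  have hsplit : ∀ x, ((w x : ℤ) - x) = ((if x < w x then (w x : ℕ) - x else 0 : ℕ) : ℤ) -
      ((if w x < x then (x : ℕ) - w x else 0 : ℕ) : ℤ) := by
    intro x
    simp only [Fin.lt_def]
    split_ifs <;> omega
  rw [Finset.sum_congr rfl fun x _ => hsplit x, sum_sub_distrib, sub_eq_zero] at hzero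
  exact_mod_cast hzero

namespace Equiv.Perm

variable {n : ℕ} (v : Perm (Fin (n + 1)))

theorem oneLine_blockCyclePerm_one : oneLine v.blockCyclePerm 1 = oneLine v 1 := by
  have h := fun w : Perm (Fin (n + 1)) => oneLine_val_add_one w 0
  simp only [Fin.val_zero, zero_add] at h
  rw [h, h, blockCyclePerm_zero]

theorem nexcNum_blockCyclePerm : nexcNum v.blockCyclePerm = desNum v := by
  rw [nexcNum_eq_sum, desNum_eq_sum, sum_blockCyclePerm_lt fun _ _ => 1]

theorem depthStat_blockCyclePerm : depthStat v.blockCyclePerm = drpStat v := by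
  rw [depthStat_eq_sum, sum_excedance_eq_sum_nonexcedance, drpStat_eq_sum,
    sum_blockCyclePerm_lt fun a b => (a : ℕ) - b]

end Equiv.Perm

theorem stmt11_general (n : ℕ) :
    ∃ φ : Equiv.Perm (Fin n) → Equiv.Perm (Fin n), Function.Bijective φ ∧
      ∀ w : Equiv.Perm (Fin n),
        oneLine (φ w) 1 = oneLine w 1 ∧
        nexcNum w = desNum (φ w) ∧
        depthStat w = drpStat (φ w) := by
  cases n with
  | zero =>
    exact ⟨id, Function.bijective_id,
      fun w => ⟨rfl, by simp [nexcNum, desNum], by simp [depthStat, drpStat]⟩⟩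
  | succ n =>
    let ψ := Equiv.ofBijective _ (Finite.injective_iff_bijective.mp
      (Equiv.Perm.blockCyclePerm_injective (n := n)))
    refine ⟨ψ.symm, ψ.symm.bijective, fun w => ?_⟩
    obtain ⟨v, rfl⟩ := ψ.surjective w
    rw [ψ.symm_apply_apply]
    exact ⟨v.oneLine_blockCyclePerm_one.symm, v.nexcNum_blockCyclePerm,
      v.depthStat_blockCyclePerm⟩

/-- there is a bijection φ of 𝔖ₙ preserving the first letter with
nexc(w) = des(φ(w)) and depth(w) = drp(φ(w)). -/
theorem stmt11 (n : ℕ) (hn : 0 < n) :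
    ∃ φ : Equiv.Perm (Fin n) → Equiv.Perm (Fin n), Function.Bijective φ ∧
      ∀ w : Equiv.Perm (Fin n),
        oneLine (φ w) 1 = oneLine w 1 ∧
        nexcNum w = desNum (φ w) ∧
        depthStat w = drpStat (φ w) :=
  stmt11_general n
end

section
/- For every positive integer n and every subset I of {1,...,n}, the number of permutations π of {1,...,n} with F̂ix(π) = I equals the number of permutations π of {1,...,n} with Suc(π) = I. -/
open Finset

open Function Equiv

section Rank
variable {m : ℕ}

def rk (κ : Fin m → ℕ) (x : Fin m) : ℕ := #(univ.filter fun y => κ y < κ x)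

lemma rk_lt (κ : Fin m → ℕ) (x : Fin m) : rk κ x < m := by
  have h : univ.filter (fun y => κ y < κ x) ⊆ univ.erase x := by
    intro y hy
    simp only [mem_filter, mem_univ, true_and] at hy
    refine mem_erase.2 ⟨?_, mem_univ _⟩
    rintro rfl; exact lt_irrefl _ hy
  calc rk κ x ≤ #(univ.erase x) := card_le_card h
    _ < #(univ : Finset (Fin m)) := card_erase_lt_of_mem (mem_univ x)
    _ = m := by simp

lemma rk_lt_rk (κ : Fin m → ℕ) {x y : Fin m} (h : κ y < κ x) : rk κ y < rk κ x := by
  apply card_lt_card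
  constructor
  · intro z hz
    simp only [mem_filter, mem_univ, true_and] at hz ⊢
    exact lt_trans hz h
  · intro hsub
    have := hsub (mem_filter.2 ⟨mem_univ y, h⟩)
    simp only [mem_filter, mem_univ, true_and] at this
    exact lt_irrefl _ this

lemma rk_lt_iff (κ : Fin m → ℕ) (hκ : Injective κ) {x y : Fin m} :
    rk κ y < rk κ x ↔ κ y < κ x := by
  constructor
  · intro h
    rcases lt_trichotomy (κ y) (κ x) with h' | h' | h'
    · exact h'
    · exact absurd (hκ h' ▸ h) (lt_irrefl _)
    · exact absurd (lt_trans h (rk_lt_rk κ h')) (lt_irrefl _)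
  · exact rk_lt_rk κ

lemma rk_inj (κ : Fin m → ℕ) (hκ : Injective κ) : Injective (rk κ) := by
  intro x y h
  by_contra hxy
  rcases lt_trichotomy (κ x) (κ y) with h' | h' | h'
  · exact absurd (h ▸ rk_lt_rk κ h') (lt_irrefl _)
  · exact hxy (hκ h')
  · exact absurd (h ▸ rk_lt_rk κ h') (lt_irrefl _)

noncomputable def rkPerm (κ : Fin m → ℕ) (hκ : Injective κ) : Equiv.Perm (Fin m) :=
  Equiv.ofBijective (fun x => ⟨rk κ x, rk_lt κ x⟩)
    (Finite.injective_iff_bijective.1 (fun a b h => rk_inj κ hκ (congrArg Fin.val h)))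

lemma rkPerm_apply (κ : Fin m → ℕ) (hκ : Injective κ) (x : Fin m) :
    (rkPerm κ hκ x : ℕ) = rk κ x := rfl

lemma rk_succ (κ : Fin m → ℕ) (hκ : Injective κ) {x x' : Fin m}
    (h : κ x = κ x' + 1) : rk κ x = rk κ x' + 1 := by
  have hx : x' ∉ univ.filter (fun y => κ y < κ x') := by
    simp
  have : univ.filter (fun y => κ y < κ x) = insert x' (univ.filter fun y => κ y < κ x') := by
    ext z
    simp only [mem_filter, mem_univ, true_and, mem_insert]
    constructor
    · intro hz
      rcases lt_trichotomy (κ z) (κ x') with h' | h' | h'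
      · exact Or.inr h'
      · exact Or.inl (hκ h')
      · omega
    · rintro (rfl | hz) <;> omega
  rw [rk, this, card_insert_of_notMem hx]; rfl

lemma count_lt_perm (σ : Equiv.Perm (Fin m)) (x : Fin m) :
    rk (fun y => (σ y : ℕ)) x = (σ x : ℕ) := by
  have key : #(univ.filter fun y => (σ y : ℕ) < (σ x : ℕ)) = #(Iio (σ x)) := by
    apply card_bij (fun y _ => σ y)
    · intro y hy
      simp only [mem_filter, mem_univ, true_and] at hy
      exact Finset.mem_Iio.2 hy
    · intro a _ b _ h; exact σ.injective h
    · intro z hz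
      refine ⟨σ.symm z, ?_, by simp⟩
      simp only [mem_filter, mem_univ, true_and, Equiv.apply_symm_apply]
      exact Fin.lt_def.mp (Finset.mem_Iio.1 hz)
  rw [rk, key, Fin.card_Iio]

end Rank

lemma lex_helper {nn a a' d d' : ℕ} (hd : d < nn) (hd' : d' < nn) :
    a * nn + d < a' * nn + d' ↔ a < a' ∨ (a = a' ∧ d < d') := by
  constructor
  · intro h
    rcases lt_trichotomy a a' with h' | h' | h'
    · exact Or.inl h'
    · subst h'; exact Or.inr ⟨rfl, by omega⟩
    · exfalso
      have key : a' * nn + nn ≤ a * nn := by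
        have h2 : (a' + 1) * nn ≤ a * nn := Nat.mul_le_mul_right nn h'
        rwa [Nat.succ_mul] at h2
      omega
  · rintro (h | ⟨rfl, h⟩)
    · have key : a * nn + nn ≤ a' * nn := by
        have h2 : (a + 1) * nn ≤ a' * nn := Nat.mul_le_mul_right nn h
        rwa [Nat.succ_mul] at h2
      omega
    · omega

lemma lex_inj_helper {nn a a' d d' : ℕ} (hd : d < nn) (hd' : d' < nn)
    (h : a * nn + d = a' * nn + d') : a = a' ∧ d = d' := by
  rcases lt_trichotomy a a' with h' | h' | h'
  · have := (lex_helper hd hd').2 (Or.inl h'); omega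
  · subst h'; omega
  · have := (lex_helper hd' hd).2 (Or.inl h'); omega


section Blocks
variable {n : ℕ}

def pr (b : Fin n) : Fin n := ⟨(b : ℕ) - 1, lt_of_le_of_lt (Nat.sub_le _ _) b.isLt⟩

def ld (B : Finset (Fin n)) (x : Fin n) : Fin n := (((Bᶜ).filter (· ≤ x)).max).getD x

def dd (B : Finset (Fin n)) (x : Fin n) : ℕ := (x : ℕ) - (ld B x : ℕ)

variable (B : Finset (Fin n)) (h0 : ∀ b ∈ B, (b : ℕ) ≠ 0)
include h0

lemma ld_spec (x : Fin n) :
    ld B x ∈ Bᶜ ∧ ld B x ≤ x ∧ ∀ z ∈ Bᶜ, z ≤ x → z ≤ ld B x := by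
  have hz : (⟨0, x.pos⟩ : Fin n) ∈ (Bᶜ).filter (· ≤ x) := by
    refine mem_filter.2 ⟨mem_compl.2 fun h => h0 _ h rfl, ?_⟩
    simp [Fin.le_def]
  have hne : ((Bᶜ).filter (· ≤ x)).Nonempty := ⟨_, hz⟩
  have hmax : ld B x = ((Bᶜ).filter (· ≤ x)).max' hne := by
    rw [ld, ← Finset.coe_max' hne]; rfl
  have hmem := Finset.max'_mem _ hne
  rw [← hmax] at hmem
  rw [mem_filter] at hmem
  refine ⟨hmem.1, hmem.2, fun z hzc hzx => ?_⟩
  rw [hmax]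
  exact Finset.le_max' ((Bᶜ).filter (· ≤ x)) z (mem_filter.2 ⟨hzc, hzx⟩)

lemma ld_mem (x : Fin n) : ld B x ∈ Bᶜ := (ld_spec B h0 x).1

lemma ld_le_val (x : Fin n) : (ld B x : ℕ) ≤ (x : ℕ) := (ld_spec B h0 x).2.1

lemma le_ld (x : Fin n) {z : Fin n} (hz : z ∈ Bᶜ) (hzx : z ≤ x) : z ≤ ld B x :=
  (ld_spec B h0 x).2.2 z hz hzx

lemma ld_eq_self {x : Fin n} (hx : x ∈ Bᶜ) : ld B x = x :=
  le_antisymm (ld_spec B h0 x).2.1 (le_ld B h0 x hx le_rfl)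

lemma ld_add (x : Fin n) (t : ℕ) (ht : (ld B x : ℕ) + t ≤ (x : ℕ)) :
    ld B ⟨(ld B x : ℕ) + t, lt_of_le_of_lt ht x.isLt⟩ = ld B x := by
  have h1 : ld B x ≤ ld B ⟨(ld B x : ℕ) + t, lt_of_le_of_lt ht x.isLt⟩ :=
    le_ld B h0 _ (ld_mem B h0 x) (Fin.le_def.2 (Nat.le_add_right _ _))
  have h2 : ld B ⟨(ld B x : ℕ) + t, lt_of_le_of_lt ht x.isLt⟩ ≤ ld B x :=
    le_ld B h0 x (ld_mem B h0 _) (Fin.le_def.2 (le_trans (ld_le_val B h0 _) ht))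
  exact le_antisymm h2 h1

lemma ld_pr {b : Fin n} (hb : b ∈ B) : ld B (pr b) = ld B b := by
  have hlt : (ld B b : ℕ) ≠ (b : ℕ) := by
    intro h
    have heq : ld B b = b := Fin.ext h
    exact (mem_compl.1 (ld_mem B h0 b)) (by rw [heq]; exact hb)
  have h1 : (ld B b : ℕ) ≤ (b : ℕ) - 1 := by
    have := ld_le_val B h0 b; omega
  apply le_antisymm
  · exact le_ld B h0 b (ld_mem B h0 (pr b)) (le_trans (ld_spec B h0 (pr b)).2.1
      (Fin.le_def.2 (Nat.sub_le _ _)))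
  · exact le_ld B h0 (pr b) (ld_mem B h0 b) (Fin.le_def.2 h1)

lemma dd_pr {b : Fin n} (hb : b ∈ B) : dd B b = dd B (pr b) + 1 := by
  have hb0 : (b : ℕ) ≠ 0 := h0 b hb
  have hlt : (ld B b : ℕ) ≠ (b : ℕ) := by
    intro h
    have heq : ld B b = b := Fin.ext h
    exact (mem_compl.1 (ld_mem B h0 b)) (by rw [heq]; exact hb)
  have h1 := ld_le_val B h0 b
  rw [dd, dd, ld_pr B h0 hb]
  have h2 : ((pr b : Fin n) : ℕ) = (b : ℕ) - 1 := rfl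
  omega

lemma sigma_block (σ : Equiv.Perm (Fin n))
    (hσ : ∀ b ∈ B, (σ b : ℕ) = (σ (pr b) : ℕ) + 1) (x : Fin n) :
    (σ x : ℕ) = (σ (ld B x) : ℕ) + dd B x := by
  suffices H : ∀ m (x : Fin n), (x : ℕ) ≤ m → (σ x : ℕ) = (σ (ld B x) : ℕ) + dd B x from
    H (x : ℕ) x le_rfl
  intro m
  induction m with
  | zero =>
    intro x hx
    have hxc : x ∈ Bᶜ := mem_compl.2 fun h => h0 x h (by omega)
    rw [ld_eq_self B h0 hxc, dd, ld_eq_self B h0 hxc]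
    omega
  | succ m IH =>
    intro x hx
    by_cases hxB : x ∈ B
    · have hx0 : (x : ℕ) ≠ 0 := h0 x hxB
      have hpr : ((pr x : Fin n) : ℕ) ≤ m := by simp only [pr]; omega
      rw [hσ x hxB, IH (pr x) hpr, ld_pr B h0 hxB, dd_pr B h0 hxB]
      omega
    · have hxc : x ∈ Bᶜ := mem_compl.2 hxB
      rw [ld_eq_self B h0 hxc, dd, ld_eq_self B h0 hxc]
      omega

lemma below_leader (σ : Equiv.Perm (Fin n))
    (hσ : ∀ b ∈ B, (σ b : ℕ) = (σ (pr b) : ℕ) + 1) {x q : Fin n}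
    (hq : q ∈ Bᶜ) (hne : ld B x ≠ q) (hlt : (σ (ld B x) : ℕ) < (σ q : ℕ)) :
    (σ x : ℕ) < (σ q : ℕ) := by
  by_contra hc
  push_neg at hc
  have hbl := sigma_block B h0 σ hσ x
  have hdd : dd B x = (x : ℕ) - (ld B x : ℕ) := rfl
  have hldle := ld_le_val B h0 x
  set t := (σ q : ℕ) - (σ (ld B x) : ℕ) with hts
  have ht1 : 1 ≤ t := by omega
  have ht2 : t ≤ dd B x := by omega
  have hyle : (ld B x : ℕ) + t ≤ (x : ℕ) := by omega
  set y : Fin n := ⟨(ld B x : ℕ) + t, lt_of_le_of_lt hyle x.isLt⟩ with hy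
  have hldy : ld B y = ld B x := ld_add B h0 x t hyle
  have hsy : (σ y : ℕ) = (σ (ld B x) : ℕ) + t := by
    rw [sigma_block B h0 σ hσ y, hldy]
    have : dd B y = t := by rw [dd, hldy]; simp [hy]
    rw [this]
  have hyq : y = q := σ.injective (Fin.ext (by omega))
  apply hne
  rw [← ld_eq_self B h0 hq, ← hyq, hldy]

end Blocks

section CoreDefs
variable {n : ℕ}

def keyf (B : Finset (Fin n)) (e : Equiv.Perm {y : Fin n // y ∈ Bᶜ}) (x : Fin n) : ℕ :=
  (if h : ld B x ∈ Bᶜ then (((e ⟨ld B x, h⟩ : {y : Fin n // y ∈ Bᶜ}) : Fin n) : ℕ) else 0) * n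
    + dd B x

variable (B : Finset (Fin n)) (h0 : ∀ b ∈ B, (b : ℕ) ≠ 0)
include h0

lemma dd_lt (x : Fin n) : dd B x < n :=
  lt_of_le_of_lt (le_trans (Nat.sub_le _ _) le_rfl) x.isLt

lemma keyf_eq (e : Equiv.Perm {y : Fin n // y ∈ Bᶜ}) (x : Fin n) :
    keyf B e x = ((e ⟨ld B x, ld_mem B h0 x⟩ : {y : Fin n // y ∈ Bᶜ}) : Fin n) * n + dd B x := by
  rw [keyf, dif_pos (ld_mem B h0 x)]

lemma keyf_inj (e : Equiv.Perm {y : Fin n // y ∈ Bᶜ}) : Injective (keyf B e) := by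
  intro x y h
  rw [keyf_eq B h0, keyf_eq B h0] at h
  obtain ⟨ha, hd⟩ := lex_inj_helper (dd_lt B h0 x) (dd_lt B h0 y) h
  have hld : ld B x = ld B y := by
    have h5 := e.injective (Subtype.ext (Fin.ext ha))
    exact congrArg Subtype.val h5
  have hx := ld_le_val B h0 x
  have hy := ld_le_val B h0 y
  have hvx : (x : ℕ) = (ld B x : ℕ) + dd B x := by rw [dd]; omega
  have hvy : (y : ℕ) = (ld B y : ℕ) + dd B y := by rw [dd]; omega
  apply Fin.ext
  rw [hvx, hvy, hld, hd]

lemma keyf_succ (e : Equiv.Perm {y : Fin n // y ∈ Bᶜ}) {b : Fin n} (hb : b ∈ B) :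
    keyf B e b = keyf B e (pr b) + 1 := by
  rw [keyf_eq B h0, keyf_eq B h0]
  have h1 : ld B (pr b) = ld B b := ld_pr B h0 hb
  have h2 : dd B b = dd B (pr b) + 1 := dd_pr B h0 hb
  have h3 : (⟨ld B (pr b), ld_mem B h0 (pr b)⟩ : {y : Fin n // y ∈ Bᶜ})
      = ⟨ld B b, ld_mem B h0 b⟩ := Subtype.ext h1
  rw [h3, h2]
  omega

end CoreDefs

section Core
variable {n : ℕ} (B : Finset (Fin n)) (h0 : ∀ b ∈ B, (b : ℕ) ≠ 0)

noncomputable def Psi (e : Equiv.Perm {y : Fin n // y ∈ Bᶜ}) : Equiv.Perm (Fin n) :=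
  rkPerm (keyf B e) (keyf_inj B h0 e)
-- marker

include h0 in
lemma Psi_cond (e : Equiv.Perm {y : Fin n // y ∈ Bᶜ}) :
    ∀ b ∈ B, ((Psi B h0 e) b : ℕ) = ((Psi B h0 e) (pr b) : ℕ) + 1 := by
  intro b hb
  show rk (keyf B e) b = rk (keyf B e) (pr b) + 1
  exact rk_succ (keyf B e) (keyf_inj B h0 e) (keyf_succ B h0 e hb)

include h0 in
lemma Psi_order (e : Equiv.Perm {y : Fin n // y ∈ Bᶜ}) (x y : Fin n) :
    ((Psi B h0 e) y : ℕ) < ((Psi B h0 e) x : ℕ) ↔ keyf B e y < keyf B e x :=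
  rk_lt_iff (keyf B e) (keyf_inj B h0 e)

include h0 in
lemma keyf_leader (e : Equiv.Perm {y : Fin n // y ∈ Bᶜ}) (p : {y : Fin n // y ∈ Bᶜ}) :
    keyf B e (p : Fin n) = ((e p : {y : Fin n // y ∈ Bᶜ}) : Fin n) * n := by
  rw [keyf_eq B h0]
  have h1 : ld B (p : Fin n) = (p : Fin n) := ld_eq_self B h0 p.2
  have h2 : dd B (p : Fin n) = 0 := by rw [dd, h1]; omega
  have h3 : (⟨ld B (p : Fin n), ld_mem B h0 (p : Fin n)⟩ : {y : Fin n // y ∈ Bᶜ}) = p := by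
    exact Subtype.ext h1
  rw [h3, h2]
  omega

include h0 in
lemma coe_lt_iff (e : Equiv.Perm {y : Fin n // y ∈ Bᶜ}) (p q : {y : Fin n // y ∈ Bᶜ}) :
    ((e p : Fin n) : ℕ) < ((e q : Fin n) : ℕ) ↔ e p < e q := by
  rw [← Subtype.coe_lt_coe, Fin.lt_def]

include h0 in
lemma keyf_lt_leader (e : Equiv.Perm {y : Fin n // y ∈ Bᶜ}) (p q : {y : Fin n // y ∈ Bᶜ}) :
    keyf B e (p : Fin n) < keyf B e (q : Fin n) ↔ e p < e q := by
  have hn : 0 < n := (p : Fin n).pos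
  rw [keyf_leader B h0, keyf_leader B h0, Nat.mul_lt_mul_right hn, coe_lt_iff B h0]

include h0 in
lemma Psi_inj : Injective (Psi B h0) := by
  intro e e' h
  have key : ∀ p q : {y : Fin n // y ∈ Bᶜ}, e p < e q ↔ e' p < e' q := by
    intro p q
    rw [← keyf_lt_leader B h0 e p q, ← keyf_lt_leader B h0 e' p q,
      ← Psi_order B h0 e, ← Psi_order B h0 e', h]
  set φ : Equiv.Perm {y : Fin n // y ∈ Bᶜ} := e.symm.trans e' with hφ
  have hsm : StrictMono φ := by
    intro a b hab
    have h1 : e (e.symm a) < e (e.symm b) := by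
      rwa [Equiv.apply_symm_apply, Equiv.apply_symm_apply]
    exact (key _ _).1 h1
  have hid : StrictMono.orderIsoOfSurjective (φ : {y : Fin n // y ∈ Bᶜ} → _) hsm φ.surjective
      = OrderIso.refl _ := Subsingleton.elim _ _
  have hφid : ∀ x, φ x = x := by
    intro x
    have h2 := congrArg (fun (f : _ ≃o _) => f x) hid
    simpa using h2
  apply Equiv.ext
  intro p
  have := hφid (e p)
  simp only [hφ, Equiv.trans_apply, Equiv.symm_apply_apply] at this
  rw [this]

include h0 in
lemma Psi_surj (σ : Equiv.Perm (Fin n))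
    (hσ : ∀ b ∈ B, (σ b : ℕ) = (σ (pr b) : ℕ) + 1) : ∃ e, Psi B h0 e = σ := by
  classical
  set ω := (Bᶜ).orderIsoOfFin rfl with hω
  set κ₀ : Fin (Bᶜ).card → ℕ := fun i => ((σ ((ω.toEquiv i : {y : Fin n // y ∈ Bᶜ}) : Fin n)) : ℕ)
    with hκ₀
  have hκinj : Injective κ₀ := by
    intro i j hij
    exact ω.toEquiv.injective (Subtype.coe_injective (σ.injective (Fin.ext hij)))
  set e₀ := rkPerm κ₀ hκinj with he₀
  set e : Equiv.Perm {y : Fin n // y ∈ Bᶜ} := (ω.toEquiv.symm.trans e₀).trans ω.toEquiv with he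
  have hevals : ∀ p q : {y : Fin n // y ∈ Bᶜ},
      e p < e q ↔ ((σ p : Fin n) : ℕ) < ((σ q : Fin n) : ℕ) := by
    intro p q
    show ω.toEquiv (e₀ (ω.toEquiv.symm p)) < ω.toEquiv (e₀ (ω.toEquiv.symm q)) ↔ _
    have h3 : ∀ a b : Fin (Bᶜ).card, ω.toEquiv a < ω.toEquiv b ↔ a < b := fun a b => ω.lt_iff_lt
    have h4 : ∀ r : {y : Fin n // y ∈ Bᶜ}, κ₀ (ω.toEquiv.symm r) = ((σ (r : Fin n)) : ℕ) := by
      intro r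
      simp only [hκ₀]
      rw [Equiv.apply_symm_apply]
    rw [h3, Fin.lt_def]
    show rk κ₀ (ω.toEquiv.symm p) < rk κ₀ (ω.toEquiv.symm q) ↔ _
    rw [rk_lt_iff κ₀ hκinj, h4 p, h4 q]
  have main : ∀ x y : Fin n, keyf B e y < keyf B e x ↔ (σ y : ℕ) < (σ x : ℕ) := by
    intro x y
    have hbx := sigma_block B h0 σ hσ x
    have hby := sigma_block B h0 σ hσ y
    set py : {y : Fin n // y ∈ Bᶜ} := ⟨ld B y, ld_mem B h0 y⟩ with hpy
    set px : {y : Fin n // y ∈ Bᶜ} := ⟨ld B x, ld_mem B h0 x⟩ with hpx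
    rw [keyf_eq B h0, keyf_eq B h0, lex_helper (dd_lt B h0 y) (dd_lt B h0 x)]
    have hA : ((e py : Fin n) : ℕ) < ((e px : Fin n) : ℕ)
        ↔ (σ (ld B y) : ℕ) < (σ (ld B x) : ℕ) := by
      rw [coe_lt_iff B h0, hevals]
    have hE : (((e py : Fin n)) : ℕ) = ((e px : Fin n) : ℕ)
        ↔ (ld B y : ℕ) = (ld B x : ℕ) := by
      constructor
      · intro hh
        have := e.injective (Subtype.ext (Fin.ext hh))
        exact congrArg (fun z => ((Subtype.val z : Fin n) : ℕ)) this
      · intro hh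
        have : py = px := Subtype.ext (Fin.ext hh)
        rw [this]
    rw [hA, hE]
    have c1 : (σ (ld B y) : ℕ) < (σ (ld B x) : ℕ) → (σ y : ℕ) < (σ (ld B x) : ℕ) := by
      intro hc
      refine below_leader B h0 σ hσ (ld_mem B h0 x) (fun heq => ?_) hc
      rw [heq] at hc; omega
    have c2 : (σ (ld B x) : ℕ) < (σ (ld B y) : ℕ) → (σ x : ℕ) < (σ (ld B y) : ℕ) := by
      intro hc
      refine below_leader B h0 σ hσ (ld_mem B h0 y) (fun heq => ?_) hc
      rw [heq] at hc; omega
    have c3 : (ld B y : ℕ) = (ld B x : ℕ) → (σ (ld B y) : ℕ) = (σ (ld B x) : ℕ) := by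
      intro hh; rw [Fin.ext hh]
    have c4 : (σ (ld B y) : ℕ) = (σ (ld B x) : ℕ) → (ld B y : ℕ) = (ld B x : ℕ) := by
      intro hh; rw [σ.injective (Fin.ext hh)]
    omega
  refine ⟨e, ?_⟩
  apply Equiv.ext
  intro x
  apply Fin.ext
  show rk (keyf B e) x = (σ x : ℕ)
  have hfe : univ.filter (fun y => keyf B e y < keyf B e x)
      = univ.filter (fun y => (σ y : ℕ) < (σ x : ℕ)) := by
    apply filter_congr
    intro y _
    exact main x y
  rw [rk, hfe]
  exact count_lt_perm σ x

include h0 in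
lemma suc_card :
    #(univ.filter fun π : Equiv.Perm (Fin n) => ∀ b ∈ B, (π b : ℕ) = (π (pr b) : ℕ) + 1)
      = (#(Bᶜ)).factorial := by
  classical
  have h1 : #(univ : Finset (Equiv.Perm {y : Fin n // y ∈ Bᶜ}))
      = #(univ.filter fun π : Equiv.Perm (Fin n) => ∀ b ∈ B, (π b : ℕ) = (π (pr b) : ℕ) + 1) := by
    apply Finset.card_bij (fun e _ => Psi B h0 e)
    · intro e _
      exact mem_filter.2 ⟨mem_univ _, Psi_cond B h0 e⟩
    · intro a _ b _ hab
      exact Psi_inj B h0 hab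
    · intro σ hσ
      obtain ⟨e, he⟩ := Psi_surj B h0 σ (mem_filter.1 hσ).2
      exact ⟨e, mem_univ e, he⟩
  rw [← h1, Finset.card_univ, Fintype.card_perm, Fintype.card_coe]

include h0 in
lemma fix_card :
    #(univ.filter fun π : Equiv.Perm (Fin n) => ∀ b ∈ B, π b = b) = (#(Bᶜ)).factorial := by
  classical
  have h1 : #(univ.filter fun π : Equiv.Perm (Fin n) => ∀ b ∈ B, π b = b)
      = Fintype.card {f : Equiv.Perm (Fin n) // ∀ b ∈ B, f b = b} :=
    (Fintype.card_subtype _).symm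
  have e1 : {f : Equiv.Perm (Fin n) // ∀ b ∈ B, f b = b}
      ≃ Equiv.Perm {x : Fin n // x ∉ B} := by
    refine (Equiv.subtypeEquivRight (fun f => ?_)).trans
      (Equiv.Perm.subtypeEquivSubtypePerm (fun a => a ∉ B)).symm
    constructor
    · intro hf a ha
      exact hf a (not_not.1 ha)
    · intro hf b hb
      exact hf b (not_not.2 hb)
  rw [h1, Fintype.card_congr e1, Fintype.card_perm]
  congr 1
  rw [Fintype.card_subtype]
  congr 1
  ext x
  simp

end Core

section Translate
variable {n : ℕ}

lemma oneLine_eq (π : Equiv.Perm (Fin n)) {k : ℕ} (hk : k - 1 < n) :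
    oneLine π k = (π ⟨k - 1, hk⟩ : ℕ) + 1 := dif_pos hk

def BI (n : ℕ) (I : Finset ℕ) : Finset (Fin n) := univ.filter (fun b => (b : ℕ) + 1 ∈ I)

lemma BI_h0 {I : Finset ℕ} (hI : I ⊆ Finset.Icc 2 n) : ∀ b ∈ BI n I, (b : ℕ) ≠ 0 := by
  intro b hb
  have := mem_Icc.1 (hI (mem_filter.1 hb).2)
  omega

lemma FixHat_subs (π : Equiv.Perm (Fin n)) : FixHat π ⊆ Finset.Icc 2 n := by
  intro v hv
  obtain ⟨i, hi, rfl⟩ := mem_image.1 hv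
  obtain ⟨h1, h2⟩ := mem_filter.1 hi
  rwa [h2]

lemma SucSet_subs (π : Equiv.Perm (Fin n)) : SucSet π ⊆ Finset.Icc 2 n := by
  intro v hv
  obtain ⟨i, hi, rfl⟩ := mem_image.1 hv
  obtain ⟨h1, h2⟩ := mem_filter.1 hi
  obtain ⟨hi1, hi2⟩ := mem_Icc.1 h1
  have hn2 : 2 ≤ n := by omega
  have hia : i + 1 - 1 < n := by omega
  have hib : i - 1 < n := by omega
  rw [oneLine_eq π hia] at h2 ⊢
  rw [oneLine_eq π hib] at h2
  have hv1 := (π ⟨i + 1 - 1, hia⟩).isLt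
  rw [mem_Icc]
  omega

lemma subset_FixHat_iff {I : Finset ℕ} (hI : I ⊆ Finset.Icc 2 n) (π : Equiv.Perm (Fin n)) :
    I ⊆ FixHat π ↔ ∀ b ∈ BI n I, π b = b := by
  constructor
  · intro h b hb
    have hbI : (b : ℕ) + 1 ∈ I := (mem_filter.1 hb).2
    have hmem := h hbI
    obtain ⟨i, hi, hv⟩ := mem_image.1 hmem
    obtain ⟨h1, h2⟩ := mem_filter.1 hi
    rw [h2] at hv
    subst hv
    have hia : (b : ℕ) + 1 - 1 < n := by have := b.isLt; omega
    rw [oneLine_eq π hia] at h2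
    have hbb : (⟨(b : ℕ) + 1 - 1, hia⟩ : Fin n) = b := Fin.ext (by simp)
    rw [hbb] at h2
    exact Fin.ext (by omega)
  · intro h v hv
    have hv2 := mem_Icc.1 (hI hv)
    have hb1 : v - 1 < n := by omega
    set b : Fin n := ⟨v - 1, hb1⟩ with hbdef
    have hbv : (b : ℕ) = v - 1 := by rw [hbdef]
    have hb : b ∈ BI n I := by
      refine mem_filter.2 ⟨mem_univ _, ?_⟩
      rw [hbv, Nat.sub_add_cancel (by omega)]
      exact hv
    have hπb := h b hb
    refine mem_image.2 ⟨v, mem_filter.2 ⟨hI hv, ?_⟩, ?_⟩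
    · rw [oneLine_eq π hb1, ← hbdef, hπb, hbv]
      omega
    · rw [oneLine_eq π hb1, ← hbdef, hπb, hbv]
      omega

lemma subset_SucSet_iff {I : Finset ℕ} (hI : I ⊆ Finset.Icc 2 n) (π : Equiv.Perm (Fin n)) :
    I ⊆ SucSet π ↔ ∀ b ∈ BI n I, (π.symm b : ℕ) = (π.symm (pr b) : ℕ) + 1 := by
  constructor
  · intro h b hb
    have hbI : (b : ℕ) + 1 ∈ I := (mem_filter.1 hb).2
    have hvI := mem_Icc.1 (hI hbI)
    obtain ⟨i, hi, hv⟩ := mem_image.1 (h hbI)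
    obtain ⟨h1, h2⟩ := mem_filter.1 hi
    obtain ⟨hi1, hi2⟩ := mem_Icc.1 h1
    have hia : i + 1 - 1 < n := by omega
    have hib : i - 1 < n := by omega
    rw [oneLine_eq π hia] at h2 hv
    rw [oneLine_eq π hib] at h2
    have e1 : π ⟨i + 1 - 1, hia⟩ = b := Fin.ext (by omega)
    have e2 : π ⟨i - 1, hib⟩ = pr b := by
      apply Fin.ext
      show _ = (b : ℕ) - 1
      omega
    have s1 : (π.symm b : ℕ) = i + 1 - 1 := by rw [← e1, Equiv.symm_apply_apply]
    have s2 : (π.symm (pr b) : ℕ) = i - 1 := by rw [← e2, Equiv.symm_apply_apply]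
    omega
  · intro h v hv
    have hv2 := mem_Icc.1 (hI hv)
    have hb1 : v - 1 < n := by omega
    set b : Fin n := ⟨v - 1, hb1⟩ with hbdef
    have hbv : (b : ℕ) = v - 1 := by rw [hbdef]
    have hb : b ∈ BI n I := by
      refine mem_filter.2 ⟨mem_univ _, ?_⟩
      rw [hbv, Nat.sub_add_cancel (by omega)]
      exact hv
    have hs := h b hb
    obtain ⟨i, hidef⟩ : ∃ i : ℕ, i = (π.symm b : ℕ) := ⟨_, rfl⟩
    have hilt : i < n := by rw [hidef]; exact (π.symm b).isLt
    have hprv : ((pr b : Fin n) : ℕ) = (b : ℕ) - 1 := rfl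
    have hi1 : 1 ≤ i := by omega
    have hia : i + 1 - 1 < n := by omega
    have hib : i - 1 < n := by omega
    have e1 : (⟨i + 1 - 1, hia⟩ : Fin n) = π.symm b := by
      apply Fin.ext
      show i + 1 - 1 = ((π.symm b : Fin n) : ℕ)
      omega
    have e2 : (⟨i - 1, hib⟩ : Fin n) = π.symm (pr b) := by
      apply Fin.ext
      show i - 1 = ((π.symm (pr b) : Fin n) : ℕ)
      omega
    refine mem_image.2 ⟨i, mem_filter.2 ⟨mem_Icc.2 ⟨by omega, by omega⟩, ?_⟩, ?_⟩
    · rw [oneLine_eq π hia, oneLine_eq π hib, e1, e2, π.apply_symm_apply, π.apply_symm_apply]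
      omega
    · rw [oneLine_eq π hia, e1, π.apply_symm_apply]
      omega

lemma sup_eq {I : Finset ℕ} (hI : I ⊆ Finset.Icc 2 n) :
    #(univ.filter fun π : Equiv.Perm (Fin n) => I ⊆ FixHat π)
      = #(univ.filter fun π : Equiv.Perm (Fin n) => I ⊆ SucSet π) := by
  classical
  have h0 := BI_h0 hI
  rw [filter_congr (fun π _ => subset_FixHat_iff hI π),
    filter_congr (fun π _ => subset_SucSet_iff hI π)]
  rw [fix_card (BI n I) h0]
  rw [← suc_card (BI n I) h0]
  apply Finset.card_bij (fun (π : Equiv.Perm (Fin n)) _ => π.symm)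
  · intro π hπ
    refine mem_filter.2 ⟨mem_univ _, ?_⟩
    exact (mem_filter.1 hπ).2
  · intro a _ b _ hab
    have := congrArg Equiv.symm hab
    simpa using this
  · intro σ hσ
    refine ⟨σ.symm, mem_filter.2 ⟨mem_univ _, by simpa using (mem_filter.1 hσ).2⟩, by simp⟩

end Translate

lemma invert {α : Type*} [Fintype α] [DecidableEq α] (U : Finset ℕ) (S T : α → Finset ℕ)
    (hS : ∀ a, S a ⊆ U) (hT : ∀ a, T a ⊆ U)
    (hsup : ∀ J ⊆ U, #(univ.filter fun a => J ⊆ S a) = #(univ.filter fun a => J ⊆ T a))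
    (I : Finset ℕ) :
    #(univ.filter fun a => S a = I) = #(univ.filter fun a => T a = I) := by
  classical
  by_cases hIU : I ⊆ U
  swap
  · have e1 : ∀ (S' : α → Finset ℕ), (∀ a, S' a ⊆ U) →
        univ.filter (fun a => S' a = I) = ∅ := by
      intro S' hS'
      apply filter_false_of_mem
      intro a _ h
      exact hIU (h ▸ hS' a)
    rw [e1 S hS, e1 T hT]
  have H : ∀ m (I : Finset ℕ), I ⊆ U → #(U \ I) = m →
      #(univ.filter fun a => S a = I) = #(univ.filter fun a => T a = I) := by
    intro m
    induction m using Nat.strong_induction_on with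
    | _ m IH =>
    intro I hIU hm
    have hI_mem : I ∈ U.powerset.filter (fun J => I ⊆ J) :=
      mem_filter.2 ⟨mem_powerset.2 hIU, subset_rfl⟩
    have hred : ∀ (J : Finset ℕ) (S' : α → Finset ℕ), I ⊆ J →
        (univ.filter fun a => I ⊆ S' a).filter (fun a => S' a = J)
          = univ.filter (fun a => S' a = J) := by
      intro J S' hIJ
      ext a
      simp only [mem_filter, mem_univ, true_and]
      constructor
      · rintro ⟨_, h2⟩; exact h2
      · intro h2; exact ⟨h2 ▸ hIJ, h2⟩
    have split : ∀ (S' : α → Finset ℕ), (∀ a, S' a ⊆ U) →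
        #(univ.filter fun a => I ⊆ S' a)
          = #(univ.filter fun a => S' a = I)
            + ∑ J ∈ ((U.powerset.filter fun J => I ⊆ J).erase I),
                #(univ.filter fun a => S' a = J) := by
      intro S' hS'
      have hfib : #(univ.filter fun a => I ⊆ S' a)
          = ∑ J ∈ (U.powerset.filter fun J => I ⊆ J),
              #((univ.filter fun a => I ⊆ S' a).filter (fun a => S' a = J)) :=
        card_eq_sum_card_fiberwise
          (fun a ha => mem_filter.2 ⟨mem_powerset.2 (hS' a), (mem_filter.1 ha).2⟩)
      rw [hfib, ← Finset.add_sum_erase _ _ hI_mem, hred I S' subset_rfl]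
      congr 1
      apply sum_congr rfl
      intro J hJ
      exact congrArg Finset.card (hred J S' (mem_filter.1 (mem_of_mem_erase hJ)).2)
    have hterm : ∀ J ∈ (U.powerset.filter fun J => I ⊆ J).erase I,
        #(univ.filter fun a => S a = J) = #(univ.filter fun a => T a = J) := by
      intro J hJ
      have hne : J ≠ I := (mem_erase.1 hJ).1
      have h2 := mem_filter.1 (mem_of_mem_erase hJ)
      have hJU : J ⊆ U := mem_powerset.1 h2.1
      have hIJ : I ⊆ J := h2.2
      have hlt : #(U \ J) < m := by
        rw [← hm]
        apply card_lt_card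
        constructor
        · intro x hx
          rw [mem_sdiff] at hx ⊢
          exact ⟨hx.1, fun hxI => hx.2 (hIJ hxI)⟩
        · intro hsub
          have hss : I ⊂ J := lt_of_le_of_ne hIJ (Ne.symm hne)
          obtain ⟨x, hxJ, hxI⟩ := exists_of_ssubset hss
          exact (mem_sdiff.1 (hsub (mem_sdiff.2 ⟨hJU hxJ, hxI⟩))).2 hxJ
      exact IH _ hlt J hJU rfl
    have hs := split S hS
    have ht := split T hT
    have hsum := Finset.sum_congr rfl hterm
    have hg := hsup I hIU
    omega
  exact H _ I hIU rfl

/-- F̂ix and Suc are equidistributed as set-valued statistics. -/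
theorem stmt17 (n : ℕ) (hn : 0 < n) (I : Finset ℕ) (hI : I ⊆ Finset.Icc 1 n) :
    (Finset.univ.filter (fun π : Equiv.Perm (Fin n) => FixHat π = I)).card =
      (Finset.univ.filter (fun π : Equiv.Perm (Fin n) => SucSet π = I)).card := by
  classical
  exact invert (Finset.Icc 2 n) FixHat SucSet FixHat_subs SucSet_subs
    (fun J hJ => sup_eq hJ) I
end

section
/- For every positive integer n and every k ∈ {1,...,n}, the signed distributions of depth and drp agree on the set of permutations with first letter k: ∑_{π ∈ 𝔖_n, π(1)=k} sign(π) q^{depth(π)} = ∑_{π ∈ 𝔖_n, π(1)=k} sign(π) q^{drp(π)} as polynomials in q over the integers. -/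
open Finset

/-!
Write `G_m(stat)` for the signed generating function of `stat` over the permutations fixing
`1, …, m`. Multiplying on the left by the transposition of the values `m + 1` and `m + 2`
reverses the sign. For depth and for drp it leaves the statistic unchanged when
`π(m + 1) ∉ {m + 1, m + 2}`, and it raises the statistic by one when it carries a permutation
fixing `1, …, m + 1` to one with `π(m + 1) = m + 2`. Hence `G_m = (1 - q) G_{m+1}`, so both
statistics give `G_m = (1 - q) ^ (n - 1 - m)`, and the sums over first letter `k` are
`(1 - q) ^ (n - 2)`, `-q (1 - q) ^ (n - 2)` and `0` for `k = 1`, `k = 2` and `k ≥ 3`.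
-/

open Polynomial Equiv

section

variable {n m : ℕ}

section oneLine

@[simp]
lemma oneLine_val_add_one_s19 (π : Perm (Fin n)) (i : Fin n) : oneLine π (i + 1) = π i + 1 := by
  simp [oneLine]

lemma exists_fin_eq_val_add_one {t : ℕ} (ht1 : 1 ≤ t) (htn : t ≤ n) : ∃ i : Fin n, t = i + 1 :=
  ⟨⟨t - 1, by omega⟩, by simp; omega⟩

lemma oneLine_mem_Icc (π : Perm (Fin n)) {t : ℕ} (ht1 : 1 ≤ t) (htn : t ≤ n) :
    1 ≤ oneLine π t ∧ oneLine π t ≤ n := by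
  obtain ⟨i, rfl⟩ := exists_fin_eq_val_add_one ht1 htn
  simp only [oneLine_val_add_one_s19]
  omega

lemma oneLine_inj (π : Perm (Fin n)) {s t : ℕ} (hs1 : 1 ≤ s) (hsn : s ≤ n) (ht1 : 1 ≤ t)
    (htn : t ≤ n) : oneLine π s = oneLine π t ↔ s = t := by
  obtain ⟨i, rfl⟩ := exists_fin_eq_val_add_one hs1 hsn
  obtain ⟨j, rfl⟩ := exists_fin_eq_val_add_one ht1 htn
  simp [Fin.val_inj]

lemma exists_oneLine_eq (π : Perm (Fin n)) {v : ℕ} (hv1 : 1 ≤ v) (hvn : v ≤ n) :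
    ∃ t, 1 ≤ t ∧ t ≤ n ∧ oneLine π t = v := by
  obtain ⟨j, rfl⟩ := exists_fin_eq_val_add_one hv1 hvn
  exact ⟨π.symm j + 1, by omega, (π.symm j).isLt, by simp⟩

lemma oneLine_one {t : ℕ} (ht : 1 ≤ t) : oneLine (1 : Perm (Fin n)) t = t := by
  unfold oneLine
  split_ifs <;> simp
  omega

lemma eq_one_of_oneLine_eq (π : Perm (Fin n)) (h : ∀ t, 1 ≤ t → t ≤ n → oneLine π t = t) :
    π = 1 :=
  Perm.ext fun i => Fin.ext <| by simpa using h (i + 1) (by omega) i.isLt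

lemma oneLine_swap_mul (a b : Fin n) (π : Perm (Fin n)) {t : ℕ} (ht1 : 1 ≤ t) (htn : t ≤ n) :
    oneLine (swap a b * π) t = swap (a + 1 : ℕ) (b + 1) (oneLine π t) := by
  obtain ⟨i, rfl⟩ := exists_fin_eq_val_add_one ht1 htn
  simp only [oneLine_val_add_one_s19, Perm.mul_apply]
  exact ((add_left_injective 1).comp Fin.val_injective).map_swap a b (π i)

end oneLine

section sign

lemma invNum_eq_card (π : Perm (Fin n)) :
    invNum π = #{p : Fin n × Fin n | p.1 < p.2 ∧ π p.2 < π p.1} := by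
  symm
  refine card_nbij (fun p => ((p.1 : ℕ) + 1, (p.2 : ℕ) + 1)) ?_ ?_ ?_
  · rintro ⟨i, j⟩
    simp [← Fin.val_fin_lt]
  · rintro ⟨i, j⟩ _ ⟨i', j'⟩ _
    simp [Fin.val_inj]
  · rintro ⟨a, b⟩ hab
    simp only [coe_filter, mem_product, mem_Icc, Set.mem_ofPred_eq] at hab
    obtain ⟨⟨⟨ha1, han⟩, hb1, hbn⟩, hlt, hinv⟩ := hab
    obtain ⟨i, rfl⟩ := exists_fin_eq_val_add_one ha1 han
    obtain ⟨j, rfl⟩ := exists_fin_eq_val_add_one hb1 hbn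
    refine ⟨(i, j), ?_, rfl⟩
    simp_all [← Fin.val_fin_lt]

lemma invNum_one : invNum (1 : Perm (Fin n)) = 0 := by
  rw [invNum_eq_card, card_eq_zero, filter_eq_empty_iff]
  exact fun p _ h => lt_asymm h.1 h.2

lemma sign_eq_neg_one_pow_invNum (π : Perm (Fin n)) : Perm.sign π = (-1) ^ invNum π := by
  rw [Perm.sign_eq_prod_prod_Ioi, invNum_eq_card, ← prod_const, prod_filter,
    Fintype.prod_prod_type]
  refine prod_congr rfl fun i _ => ?_
  rw [← filter_lt_eq_Ioi, prod_filter]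
  refine prod_congr rfl fun j _ => ?_
  by_cases hij : i < j
  · rcases (π.injective.ne_iff.2 hij.ne).lt_or_gt with h | h <;> simp [hij, h, h.not_gt]
  · simp [hij]

lemma neg_one_pow_invNum_swap_mul {R : Type*} [Ring R] {a b : Fin n} (hab : a ≠ b)
    (π : Perm (Fin n)) : (-1 : R) ^ invNum (swap a b * π) = -(-1) ^ invNum π := by
  have h := congrArg (fun u : ℤˣ => ((u : ℤ) : R)) (Perm.sign_mul (swap a b) π)
  simp only [Perm.sign_swap hab, sign_eq_neg_one_pow_invNum] at h
  push_cast at h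
  simpa using h

end sign

/-- Left multiplication by `swapVals hm` exchanges the values `m + 1` and `m + 2` in one-line
notation: `Fin n` is `0`-indexed while `oneLine` is `1`-indexed. -/
def swapVals (hm : m + 1 < n) : Perm (Fin n) :=
  swap ⟨m, by omega⟩ ⟨m + 1, hm⟩

lemma oneLine_swapVals_mul (hm : m + 1 < n) (π : Perm (Fin n)) {t : ℕ} (ht1 : 1 ≤ t)
    (htn : t ≤ n) : oneLine (swapVals hm * π) t = swap (m + 1) (m + 2) (oneLine π t) :=
  oneLine_swap_mul _ _ π ht1 htn

lemma neg_one_pow_invNum_swapVals_mul {R : Type*} [Ring R] (hm : m + 1 < n)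
    (π : Perm (Fin n)) : (-1 : R) ^ invNum (swapVals hm * π) = -(-1) ^ invNum π :=
  neg_one_pow_invNum_swap_mul (by simp) π

lemma swapVals_mul_ne_self (hm : m + 1 < n) (π : Perm (Fin n)) : swapVals hm * π ≠ π := by
  simp [swapVals, swap_eq_one_iff]

section fixSet

def fixSet (n m : ℕ) : Finset (Perm (Fin n)) :=
  {π : Perm (Fin n) | ∀ s ∈ Icc (1 : ℕ) m, oneLine π s = s}

variable {π : Perm (Fin n)}

lemma mem_fixSet : π ∈ fixSet n m ↔ ∀ s ∈ Icc 1 m, oneLine π s = s := by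
  simp [fixSet]

lemma oneLine_eq_self_of_mem_fixSet (h : π ∈ fixSet n m) {s : ℕ} (hs1 : 1 ≤ s) (hsm : s ≤ m) :
    oneLine π s = s :=
  mem_fixSet.1 h s (mem_Icc.2 ⟨hs1, hsm⟩)

lemma lt_oneLine_of_mem_fixSet (h : π ∈ fixSet n m) {t : ℕ} (hmt : m < t) (htn : t ≤ n) :
    m < oneLine π t := by
  obtain ⟨hv1, hvn⟩ := oneLine_mem_Icc π (by omega) htn
  by_contra! hvm
  have := oneLine_eq_self_of_mem_fixSet h hv1 hvm
  rw [oneLine_inj π hv1 hvn (by omega) htn] at this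
  omega

lemma fixSet_zero : fixSet n 0 = univ := by
  ext π
  simp [mem_fixSet]

lemma mem_fixSet_succ : π ∈ fixSet n (m + 1) ↔ π ∈ fixSet n m ∧ oneLine π (m + 1) = m + 1 := by
  rw [mem_fixSet, mem_fixSet, ← insert_Icc_right_eq_Icc_add_one (by omega), forall_mem_insert,
    and_comm]

lemma fixSet_eq_singleton (hnm : n ≤ m + 1) : fixSet n m = {1} := by
  ext π
  refine ⟨fun h => mem_singleton.2 <| eq_one_of_oneLine_eq π fun t ht1 htn => ?_,
    fun h => mem_fixSet.2 fun s hs => by rw [mem_singleton.1 h, oneLine_one (mem_Icc.1 hs).1]⟩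
  rcases le_or_gt t m with htm | hmt
  · exact oneLine_eq_self_of_mem_fixSet h ht1 htm
  · have := lt_oneLine_of_mem_fixSet h hmt htn
    have := (oneLine_mem_Icc π ht1 htn).2
    omega

lemma swapVals_mul_mem_fixSet (hm : m + 1 < n) (h : π ∈ fixSet n m) :
    swapVals hm * π ∈ fixSet n m := by
  refine mem_fixSet.2 fun s hs => ?_
  obtain ⟨hs1, hsm⟩ := mem_Icc.1 hs
  rw [oneLine_swapVals_mul hm π hs1 (by omega), oneLine_eq_self_of_mem_fixSet h hs1 hsm,
    swap_apply_of_ne_of_ne (by omega) (by omega)]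

end fixSet

noncomputable def signedGF (S : Finset (Perm (Fin n))) (stat : Perm (Fin n) → ℕ) : ℤ[X] :=
  ∑ π ∈ S, (-1) ^ invNum π * X ^ stat π

structure SwapCompatible (stat : Perm (Fin n) → ℕ) : Prop where
  map_one : stat 1 = 0
  swapVals_mul_of_ne {m : ℕ} (hm : m + 1 < n) (π : Perm (Fin n)) (hπ : π ∈ fixSet n m)
    (h₁ : oneLine π (m + 1) ≠ m + 1) (h₂ : oneLine π (m + 1) ≠ m + 2) :
    stat (swapVals hm * π) = stat π
  swapVals_mul_of_mem_fixSet_succ {m : ℕ} (hm : m + 1 < n) (π : Perm (Fin n))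
    (hπ : π ∈ fixSet n (m + 1)) : stat (swapVals hm * π) = stat π + 1

section signedGF

variable {stat : Perm (Fin n) → ℕ}

lemma signedGF_fiber_eq_zero (h : SwapCompatible stat) (hm : m + 1 < n) {c : ℕ}
    (hc₁ : c ≠ m + 1) (hc₂ : c ≠ m + 2) :
    signedGF {π ∈ fixSet n m | oneLine π (m + 1) = c} stat = 0 := by
  refine sum_involution (fun π _ => swapVals hm * π) (fun π hπ => ?_)
    (fun π _ _ => swapVals_mul_ne_self hm π) (fun π hπ => ?_)
    (fun π _ => swap_mul_self_mul _ _ π)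
  · obtain ⟨hπ, hπc⟩ := mem_filter.1 hπ
    rw [h.swapVals_mul_of_ne hm π hπ (hπc ▸ hc₁) (hπc ▸ hc₂), neg_one_pow_invNum_swapVals_mul]
    ring
  · obtain ⟨hπ, hπc⟩ := mem_filter.1 hπ
    refine mem_filter.2 ⟨swapVals_mul_mem_fixSet hm hπ, ?_⟩
    rw [oneLine_swapVals_mul hm π (by omega) (by omega), hπc, swap_apply_of_ne_of_ne hc₁ hc₂]

lemma filter_fixSet_eq_fixSet_succ :
    {π ∈ fixSet n m | oneLine π (m + 1) = m + 1} = fixSet n (m + 1) := by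
  ext π
  rw [mem_filter, mem_fixSet_succ]

lemma signedGF_fiber_eq_neg_X_mul (h : SwapCompatible stat) (hm : m + 1 < n) :
    signedGF {π ∈ fixSet n m | oneLine π (m + 1) = m + 2} stat =
      -X * signedGF (fixSet n (m + 1)) stat := by
  rw [signedGF, signedGF, mul_sum]
  symm
  refine sum_nbij' (swapVals hm * ·) (swapVals hm * ·) (fun σ hσ => ?_) (fun π hπ => ?_)
    (fun σ _ => swap_mul_self_mul _ _ σ) (fun π _ => swap_mul_self_mul _ _ π) (fun σ hσ => ?_)
  · obtain ⟨hσ, hσm⟩ := mem_fixSet_succ.1 hσ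
    refine mem_filter.2 ⟨swapVals_mul_mem_fixSet hm hσ, ?_⟩
    rw [oneLine_swapVals_mul hm σ (by omega) (by omega), hσm, swap_apply_left]
  · obtain ⟨hπ, hπm⟩ := mem_filter.1 hπ
    refine mem_fixSet_succ.2 ⟨swapVals_mul_mem_fixSet hm hπ, ?_⟩
    rw [oneLine_swapVals_mul hm π (by omega) (by omega), hπm, swap_apply_right]
  · rw [h.swapVals_mul_of_mem_fixSet_succ hm σ hσ, neg_one_pow_invNum_swapVals_mul]
    ring

lemma signedGF_fixSet_eq_mul (h : SwapCompatible stat) (hm : m + 1 < n) :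
    signedGF (fixSet n m) stat = (1 - X) * signedGF (fixSet n (m + 1)) stat := by
  have hmaps : ∀ π ∈ fixSet n m, oneLine π (m + 1) ∈ Icc 1 n := fun π _ =>
    mem_Icc.2 (oneLine_mem_Icc π (by omega) (by omega))
  calc signedGF (fixSet n m) stat
      = ∑ c ∈ Icc 1 n, signedGF {π ∈ fixSet n m | oneLine π (m + 1) = c} stat :=
        (sum_fiberwise_of_maps_to hmaps _).symm
    _ = signedGF {π ∈ fixSet n m | oneLine π (m + 1) = m + 1} stat +
        signedGF {π ∈ fixSet n m | oneLine π (m + 1) = m + 2} stat :=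
        sum_eq_add _ _ (by omega) (fun c _ hc => signedGF_fiber_eq_zero h hm hc.1 hc.2)
          (fun hc => absurd (mem_Icc.2 ⟨by omega, by omega⟩) hc)
          (fun hc => absurd (mem_Icc.2 ⟨by omega, by omega⟩) hc)
    _ = (1 - X) * signedGF (fixSet n (m + 1)) stat := by
        rw [filter_fixSet_eq_fixSet_succ, signedGF_fiber_eq_neg_X_mul h hm]
        ring

theorem signedGF_fixSet (h : SwapCompatible stat) (m : ℕ) :
    signedGF (fixSet n m) stat = (1 - X) ^ (n - 1 - m) := by
  induction hd : n - 1 - m generalizing m with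
  | zero => simp [fixSet_eq_singleton (show n ≤ m + 1 by omega), signedGF, h.map_one, invNum_one]
  | succ d ih =>
    rw [signedGF_fixSet_eq_mul h (by omega), ih (m + 1) (by omega), pow_succ']

theorem signedGF_filter_oneLine_one (h : SwapCompatible stat) {k : ℕ} (hk : k ∈ Icc 1 n) :
    signedGF {π | oneLine π 1 = k} stat =
      if k = 1 then (1 - X) ^ (n - 2) else if k = 2 then -X * (1 - X) ^ (n - 2) else 0 := by
  obtain ⟨hk1, hkn⟩ := mem_Icc.1 hk
  have hfiber : ({π | oneLine π 1 = k} : Finset (Perm (Fin n))) =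
      {π ∈ fixSet n 0 | oneLine π (0 + 1) = k} := by
    rw [fixSet_zero]
  rw [hfiber]
  split_ifs with h1 h2
  · rw [h1, filter_fixSet_eq_fixSet_succ, signedGF_fixSet h]
    rfl
  · rw [h2, signedGF_fiber_eq_neg_X_mul h (by omega), signedGF_fixSet h]
    rfl
  · exact signedGF_fiber_eq_zero h (by omega) h1 h2

end signedGF

section depth

variable {π : Perm (Fin n)}

lemma depthStat_eq_sum_s19 (π : Perm (Fin n)) :
    depthStat π = ∑ t ∈ Icc 1 n, (oneLine π t - t) :=
  sum_filter_of_ne fun _ _ h => by omega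

lemma depthStat_swapVals_mul_of_ne (hm : m + 1 < n) (hπ : π ∈ fixSet n m)
    (h₁ : oneLine π (m + 1) ≠ m + 1) (h₂ : oneLine π (m + 1) ≠ m + 2) :
    depthStat (swapVals hm * π) = depthStat π := by
  simp only [depthStat_eq_sum_s19]
  refine sum_congr rfl fun t ht => ?_
  obtain ⟨ht1, htn⟩ := mem_Icc.1 ht
  have hfix : t ≤ m → oneLine π t = t := oneLine_eq_self_of_mem_fixSet hπ ht1
  have hbig : m < t → m < oneLine π t := (lt_oneLine_of_mem_fixSet hπ · htn)
  have hpos : t = m + 1 → oneLine π t = oneLine π (m + 1) := fun h => h ▸ rfl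
  rw [oneLine_swapVals_mul hm π ht1 htn, swap_apply_def]
  split_ifs <;> omega

lemma depthStat_swapVals_mul_of_mem_fixSet_succ (hm : m + 1 < n) (hπ : π ∈ fixSet n (m + 1)) :
    depthStat (swapVals hm * π) = depthStat π + 1 := by
  simp only [depthStat_eq_sum_s19]
  have hterm : ∀ t ∈ Icc 1 n,
      oneLine (swapVals hm * π) t - t = (oneLine π t - t) + if t = m + 1 then 1 else 0 := by
    intro t ht
    obtain ⟨ht1, htn⟩ := mem_Icc.1 ht
    have hfix : t ≤ m + 1 → oneLine π t = t := oneLine_eq_self_of_mem_fixSet hπ ht1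
    have hbig : m + 1 < t → m + 1 < oneLine π t := (lt_oneLine_of_mem_fixSet hπ · htn)
    rw [oneLine_swapVals_mul hm π ht1 htn, swap_apply_def]
    split_ifs <;> omega
  rw [sum_congr rfl hterm, sum_add_distrib, sum_ite_eq', if_pos (mem_Icc.2 ⟨by omega, by omega⟩)]

theorem depthStat_swapCompatible : SwapCompatible (depthStat (n := n)) where
  map_one := by
    rw [depthStat_eq_sum_s19]
    exact sum_eq_zero fun t ht => by rw [oneLine_one (mem_Icc.1 ht).1, Nat.sub_self]
  swapVals_mul_of_ne hm _ hπ h₁ h₂ := depthStat_swapVals_mul_of_ne hm hπ h₁ h₂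
  swapVals_mul_of_mem_fixSet_succ hm _ hπ := depthStat_swapVals_mul_of_mem_fixSet_succ hm hπ

end depth

section drp

variable {π : Perm (Fin n)}

lemma drpStat_eq_sum_s19 (π : Perm (Fin n)) :
    drpStat π = ∑ t ∈ Icc 1 (n - 1), (oneLine π t - oneLine π (t + 1)) :=
  sum_filter_of_ne fun _ _ h => by omega

lemma sum_ite_oneLine_add_one_eq_one (π : Perm (Fin n)) {v : ℕ} (hv1 : 1 ≤ v) (hvn : v ≤ n)
    (hv : oneLine π 1 ≠ v) :
    ∑ t ∈ Icc 1 (n - 1), (if oneLine π (t + 1) = v then 1 else 0) = 1 := by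
  obtain ⟨i, hi1, hin, rfl⟩ := exists_oneLine_eq π hv1 hvn
  have hi2 : 2 ≤ i := by
    by_contra! h
    exact hv (by rw [show i = 1 by omega])
  calc ∑ t ∈ Icc 1 (n - 1), (if oneLine π (t + 1) = oneLine π i then 1 else 0)
      = ∑ t ∈ Icc 1 (n - 1), if i - 1 = t then 1 else 0 := by
        refine sum_congr rfl fun t ht => ?_
        obtain ⟨ht1, htn⟩ := mem_Icc.1 ht
        exact if_congr ((oneLine_inj π (by omega) (by omega) hi1 hin).trans (by omega)) rfl rfl
    _ = 1 := by rw [sum_ite_eq, if_pos (mem_Icc.2 ⟨by omega, by omega⟩)]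

lemma drpStat_swapVals_mul_of_ne (hm : m + 1 < n) (hπ : π ∈ fixSet n m)
    (h₁ : oneLine π (m + 1) ≠ m + 1) (h₂ : oneLine π (m + 1) ≠ m + 2) :
    drpStat (swapVals hm * π) = drpStat π := by
  simp only [drpStat_eq_sum_s19]
  -- Positions `≤ m` are fixed, so a letter next to `m + 1` or `m + 2` exceeds `m`; the drop at
  -- `t` then changes only when `π (t + 1) ∈ {m + 1, m + 2}`, by one.
  have hterm : ∀ t ∈ Icc 1 (n - 1),
      (oneLine (swapVals hm * π) t - oneLine (swapVals hm * π) (t + 1)) +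
          (if oneLine π (t + 1) = m + 1 then 1 else 0) =
        (oneLine π t - oneLine π (t + 1)) + if oneLine π (t + 1) = m + 2 then 1 else 0 := by
    intro t ht
    obtain ⟨ht1, htn⟩ := mem_Icc.1 ht
    have hne : oneLine π t ≠ oneLine π (t + 1) :=
      fun h => by simp [oneLine_inj π ht1 (by omega) (by omega : 1 ≤ t + 1) (by omega)] at h
    have hfix : t ≤ m → oneLine π t = t := oneLine_eq_self_of_mem_fixSet hπ ht1
    have hfix' : t + 1 ≤ m → oneLine π (t + 1) = t + 1 :=
      oneLine_eq_self_of_mem_fixSet hπ (by omega)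
    have hbig : m < t → m < oneLine π t := (lt_oneLine_of_mem_fixSet hπ · (by omega))
    have hbig' : m < t + 1 → m < oneLine π (t + 1) := (lt_oneLine_of_mem_fixSet hπ · (by omega))
    have hpos : t = m + 1 → oneLine π t = oneLine π (m + 1) := fun h => h ▸ rfl
    have hpos' : t + 1 = m + 1 → oneLine π (t + 1) = oneLine π (m + 1) := fun h => h ▸ rfl
    rw [oneLine_swapVals_mul hm π ht1 (by omega), oneLine_swapVals_mul hm π (by omega) (by omega),
      swap_apply_def, swap_apply_def]
    split_ifs <;> omega
  have hsum := sum_congr rfl hterm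
  have hfirst : oneLine π 1 ≠ m + 1 ∧ oneLine π 1 ≠ m + 2 := by
    rcases Nat.eq_zero_or_pos m with rfl | hm0
    · exact ⟨h₁, h₂⟩
    · rw [oneLine_eq_self_of_mem_fixSet hπ le_rfl hm0]
      omega
  rw [sum_add_distrib, sum_add_distrib,
    sum_ite_oneLine_add_one_eq_one π (by omega) (by omega) hfirst.1,
    sum_ite_oneLine_add_one_eq_one π (by omega) (by omega) hfirst.2] at hsum
  omega

lemma drpStat_swapVals_mul_of_mem_fixSet_succ (hm : m + 1 < n) (hπ : π ∈ fixSet n (m + 1)) :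
    drpStat (swapVals hm * π) = drpStat π + 1 := by
  simp only [drpStat_eq_sum_s19]
  have hterm : ∀ t ∈ Icc 1 (n - 1),
      oneLine (swapVals hm * π) t - oneLine (swapVals hm * π) (t + 1) =
        (oneLine π t - oneLine π (t + 1)) + if oneLine π (t + 1) = m + 2 then 1 else 0 := by
    intro t ht
    obtain ⟨ht1, htn⟩ := mem_Icc.1 ht
    have hne : oneLine π t ≠ oneLine π (t + 1) :=
      fun h => by simp [oneLine_inj π ht1 (by omega) (by omega : 1 ≤ t + 1) (by omega)] at h
    have hfix : t ≤ m + 1 → oneLine π t = t := oneLine_eq_self_of_mem_fixSet hπ ht1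
    have hfix' : t + 1 ≤ m + 1 → oneLine π (t + 1) = t + 1 :=
      oneLine_eq_self_of_mem_fixSet hπ (by omega)
    have hbig : m + 1 < t → m + 1 < oneLine π t := (lt_oneLine_of_mem_fixSet hπ · (by omega))
    have hbig' : m + 1 < t + 1 → m + 1 < oneLine π (t + 1) :=
      (lt_oneLine_of_mem_fixSet hπ · (by omega))
    rw [oneLine_swapVals_mul hm π ht1 (by omega), oneLine_swapVals_mul hm π (by omega) (by omega),
      swap_apply_def, swap_apply_def]
    split_ifs <;> omega
  rw [sum_congr rfl hterm, sum_add_distrib,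
    sum_ite_oneLine_add_one_eq_one π (by omega) (by omega)
      (by rw [oneLine_eq_self_of_mem_fixSet hπ le_rfl (by omega)]; omega)]

theorem drpStat_swapCompatible : SwapCompatible (drpStat (n := n)) where
  map_one := by
    rw [drpStat_eq_sum_s19]
    exact sum_eq_zero fun t ht => by
      rw [oneLine_one (mem_Icc.1 ht).1, oneLine_one (by omega), Nat.sub_eq_zero_of_le (by omega)]
  swapVals_mul_of_ne hm _ hπ h₁ h₂ := drpStat_swapVals_mul_of_ne hm hπ h₁ h₂
  swapVals_mul_of_mem_fixSet_succ hm _ hπ := drpStat_swapVals_mul_of_mem_fixSet_succ hm hπ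

end drp

end

theorem stmt19_general (n : ℕ) (k : ℕ) (hk : k ∈ Finset.Icc 1 n) :
    (∑ π ∈ Finset.univ.filter (fun π : Equiv.Perm (Fin n) => oneLine π 1 = k),
        (-1 : Polynomial ℤ) ^ invNum π * Polynomial.X ^ depthStat π) =
      ∑ π ∈ Finset.univ.filter (fun π : Equiv.Perm (Fin n) => oneLine π 1 = k),
        (-1 : Polynomial ℤ) ^ invNum π * Polynomial.X ^ drpStat π :=
  (signedGF_filter_oneLine_one depthStat_swapCompatible hk).trans
    (signedGF_filter_oneLine_one drpStat_swapCompatible hk).symm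

/-- for each k ∈ {1,…,n}, the signed distributions of depth and drp
agree on permutations with first letter k. -/
theorem stmt19 (n : ℕ) (hn : 0 < n) (k : ℕ) (hk : k ∈ Finset.Icc 1 n) :
    (∑ π ∈ Finset.univ.filter (fun π : Equiv.Perm (Fin n) => oneLine π 1 = k),
        (-1 : Polynomial ℤ) ^ invNum π * Polynomial.X ^ depthStat π) =
      ∑ π ∈ Finset.univ.filter (fun π : Equiv.Perm (Fin n) => oneLine π 1 = k),
        (-1 : Polynomial ℤ) ^ invNum π * Polynomial.X ^ drpStat π :=
  stmt19_general n k hk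
end
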